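/- For all x with 0 < x ≤ log 2, one has 1/x ≥ log(coth x) > 0, where coth x = cosh x / sinh x. -/
import Mathlib


/-- For `0 < x ≤ log 2`, one has `1/x ≥ log(coth x) > 0`, where `coth x = cosh x / sinh x`. -/
theorem log_coth_bounds (x : ℝ) (hx : 0 < x) (hx2 : x ≤ Real.log 2) :
    Real.log (Real.cosh x / Real.sinh x) ≤ 1 / x ∧
      0 < Real.log (Real.cosh x / Real.sinh x) := by
  have hs : 0 < Real.sinh x := Real.sinh_pos_iff.mpr hx
  have hsc : Real.sinh x < Real.cosh x := Real.sinh_lt_cosh x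
  have hq : 1 < Real.cosh x / Real.sinh x := (one_lt_div hs).mpr hsc
  refine ⟨?_, Real.log_pos hq⟩
  have hx1 : x < 1 := lt_of_le_of_lt hx2 (by
    have := Real.log_lt_sub_one_of_pos (show (0:ℝ) < 2 by norm_num) (by norm_num)
    linarith)
  rw [Real.log_le_iff_le_exp (by linarith)]
  have hxs : x < Real.sinh x := Real.self_lt_sinh_iff.mpr hx
  have hce : Real.cosh x ≤ Real.exp x := by
    rw [Real.cosh_eq]
    have : Real.exp (-x) ≤ Real.exp x := Real.exp_le_exp.mpr (by linarith)
    linarith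
  have h1 : Real.cosh x / Real.sinh x ≤ Real.exp x / x := by gcongr
  refine h1.trans ?_
  rw [div_le_iff₀ hx]
  have hlog : 1 - 1/x ≤ Real.log x := by
    have h := Real.log_le_sub_one_of_pos (show (0:ℝ) < 1/x by positivity)
    rw [show (1:ℝ)/x = x⁻¹ from one_div x, Real.log_inv] at h
    rw [show (1:ℝ)/x = x⁻¹ from one_div x]
    linarith
  have hsum : x ≤ 1/x + Real.log x := by nlinarith
  calc Real.exp x ≤ Real.exp (1/x + Real.log x) := Real.exp_le_exp.mpr hsum
    _ = Real.exp (1/x) * x := by rw [Real.exp_add, Real.exp_log hx]
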